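/- Let n ≥ 1, let u, A : ℝ × ℝⁿ → ℝ be smooth with u > 0 everywhere, suppose ∂ₜu = Δu + A on ℝ × ℝⁿ, and set w := log ∘ u. Then pointwise: (∂ₜ − Δ)(A·u⁻¹) = u⁻¹·(∂ₜ − Δ)A − A²·u⁻² + 2u⁻¹·⟨∇w, ∇A⟩ − 2A·u⁻¹·‖∇w‖². -/

import Mathlib

open scoped BigOperators

/-- The gradient of `f : ℝⁿ → ℝ`. -/
noncomputable def egrad {n : ℕ} (f : EuclideanSpace ℝ (Fin n) → ℝ)
    (x : EuclideanSpace ℝ (Fin n)) : EuclideanSpace ℝ (Fin n) := gradient f x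

/-- The partial derivative of `f` in the `i`-th coordinate direction. -/
noncomputable def epd {n : ℕ} (i : Fin n) (f : EuclideanSpace ℝ (Fin n) → ℝ)
    (x : EuclideanSpace ℝ (Fin n)) : ℝ := fderiv ℝ f x (EuclideanSpace.single i 1)

/-- The Laplacian `Δf = ∑ᵢ ∂ᵢ∂ᵢ f` (trace of the Hessian). -/
noncomputable def elap {n : ℕ} (f : EuclideanSpace ℝ (Fin n) → ℝ)
    (x : EuclideanSpace ℝ (Fin n)) : ℝ := ∑ i, epd i (epd i f) x

/-- The squared Hilbert–Schmidt norm `‖D²f‖²` of the Hessian of `f`. -/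
noncomputable def ehess2 {n : ℕ} (f : EuclideanSpace ℝ (Fin n) → ℝ)
    (x : EuclideanSpace ℝ (Fin n)) : ℝ := ∑ i, ∑ j, (epd i (epd j f) x) ^ 2

/-- Spatial gradient of `f : ℝ × ℝⁿ → ℝ` at fixed time `t`. -/
noncomputable def sgrad {n : ℕ} (f : ℝ × EuclideanSpace ℝ (Fin n) → ℝ) (t : ℝ)
    (x : EuclideanSpace ℝ (Fin n)) : EuclideanSpace ℝ (Fin n) := egrad (fun y => f (t, y)) x

/-- Spatial Laplacian of `f : ℝ × ℝⁿ → ℝ` at fixed time `t`. -/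
noncomputable def slap {n : ℕ} (f : ℝ × EuclideanSpace ℝ (Fin n) → ℝ) (t : ℝ)
    (x : EuclideanSpace ℝ (Fin n)) : ℝ := elap (fun y => f (t, y)) x

/-- Squared Hilbert–Schmidt norm of the spatial Hessian of `f : ℝ × ℝⁿ → ℝ`. -/
noncomputable def shess2 {n : ℕ} (f : ℝ × EuclideanSpace ℝ (Fin n) → ℝ) (t : ℝ)
    (x : EuclideanSpace ℝ (Fin n)) : ℝ := ehess2 (fun y => f (t, y)) x

/-- Time derivative `∂ₜ f` of `f : ℝ × ℝⁿ → ℝ`. -/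
noncomputable def pdt {n : ℕ} (f : ℝ × EuclideanSpace ℝ (Fin n) → ℝ) (t : ℝ)
    (x : EuclideanSpace ℝ (Fin n)) : ℝ := deriv (fun s => f (s, x)) t

section aux
variable {n : ℕ}

lemma contDiff_epd {f : EuclideanSpace ℝ (Fin n) → ℝ} (hf : ContDiff ℝ (⊤ : ℕ∞) f) (i : Fin n) :
    ContDiff ℝ (⊤ : ℕ∞) (epd i f) := by
  have h := hf.fderiv_right (m := (⊤ : ℕ∞)) (by simp)
  exact h.clm_apply contDiff_const

lemma epd_mul {f g : EuclideanSpace ℝ (Fin n) → ℝ} {x} (i : Fin n)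
    (hf : DifferentiableAt ℝ f x) (hg : DifferentiableAt ℝ g x) :
    epd i (fun y => f y * g y) x = epd i f x * g x + f x * epd i g x := by
  simp only [epd, fderiv_fun_mul hf hg]
  simp [epd, mul_comm]
  ring

lemma epd_inv {f : EuclideanSpace ℝ (Fin n) → ℝ} {x} (i : Fin n)
    (hf : DifferentiableAt ℝ f x) (hx : f x ≠ 0) :
    epd i (fun y => (f y)⁻¹) x = -((f x) ^ 2)⁻¹ * epd i f x := by
  have h := ((hasDerivAt_inv hx).comp_hasFDerivAt x hf.hasFDerivAt)
  have h2 : HasFDerivAt (fun y => (f y)⁻¹) (-((f x)^2)⁻¹ • fderiv ℝ f x) x := h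
  rw [epd, h2.fderiv]
  simp [epd, mul_comm]

lemma epd_log {f : EuclideanSpace ℝ (Fin n) → ℝ} {x} (i : Fin n)
    (hf : DifferentiableAt ℝ f x) (hx : f x ≠ 0) :
    epd i (fun y => Real.log (f y)) x = (f x)⁻¹ * epd i f x := by
  have h := ((Real.hasDerivAt_log hx).comp_hasFDerivAt x hf.hasFDerivAt)
  have h2 : HasFDerivAt (fun y => Real.log (f y)) ((f x)⁻¹ • fderiv ℝ f x) x := h
  rw [epd, h2.fderiv]
  simp [epd, mul_comm]

lemma egrad_apply {f : EuclideanSpace ℝ (Fin n) → ℝ} {x} (i : Fin n) :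
    egrad f x i = epd i f x := by
  have h1 : (inner ℝ (egrad f x) (EuclideanSpace.single i (1:ℝ)) : ℝ) = epd i f x := by
    rw [egrad, gradient, InnerProductSpace.toDual_symm_apply]; rfl
  rw [EuclideanSpace.inner_single_right] at h1
  simpa using h1

lemma inner_egrad (f g : EuclideanSpace ℝ (Fin n) → ℝ) (x) :
    (inner ℝ (egrad f x) (egrad g x) : ℝ) = ∑ i, epd i f x * epd i g x := by
  rw [PiLp.inner_apply]
  simp [egrad_apply, mul_comm]

lemma norm_egrad_sq (f : EuclideanSpace ℝ (Fin n) → ℝ) (x) :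
    ‖egrad f x‖ ^ 2 = ∑ i, (epd i f x) ^ 2 := by
  rw [← real_inner_self_eq_norm_sq, inner_egrad]
  exact Finset.sum_congr rfl fun i _ => (sq _).symm

end aux

section main
variable {n : ℕ}

lemma epd_sub {f g : EuclideanSpace ℝ (Fin n) → ℝ} {x} (i : Fin n)
    (hf : DifferentiableAt ℝ f x) (hg : DifferentiableAt ℝ g x) :
    epd i (fun y => f y - g y) x = epd i f x - epd i g x := by
  simp [epd, fderiv_fun_sub hf hg]

lemma epd2_mul_inv {f g : EuclideanSpace ℝ (Fin n) → ℝ} (hf : ContDiff ℝ (⊤ : ℕ∞) f)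
    (hg : ContDiff ℝ (⊤ : ℕ∞) g) (hfne : ∀ y, f y ≠ 0) (i : Fin n) (x : EuclideanSpace ℝ (Fin n)) :
    epd i (epd i (fun z => g z * (f z)⁻¹)) x
      = epd i (epd i g) x * (f x)⁻¹
        - 2 * ((f x) ^ 2)⁻¹ * (epd i g x * epd i f x)
        + 2 * g x * ((f x) ^ 3)⁻¹ * (epd i f x) ^ 2
        - g x * ((f x) ^ 2)⁻¹ * epd i (epd i f) x := by
  have hfd := hf.differentiable (by simp)
  have hgd := hg.differentiable (by simp)
  have hdgi := (contDiff_epd hg i).differentiable (by simp)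
  have hdfi := (contDiff_epd hf i).differentiable (by simp)
  have hinv : ∀ y, DifferentiableAt ℝ (fun z => (f z)⁻¹) y := fun y => (hfd y).inv (hfne y)
  have hff : DifferentiableAt ℝ (fun z => f z * f z) x := (hfd x).mul (hfd x)
  have hffne : f x * f x ≠ 0 := mul_ne_zero (hfne x) (hfne x)
  have hffinv : DifferentiableAt ℝ (fun z => (f z * f z)⁻¹) x := hff.inv hffne
  have hstep : epd i (fun z => g z * (f z)⁻¹)
      = fun y => epd i g y * (f y)⁻¹ - g y * (f y * f y)⁻¹ * epd i f y := by
    funext y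
    rw [epd_mul i (hgd y) (hinv y), epd_inv i (hfd y) (hfne y), ← sq]
    ring
  rw [hstep]
  rw [epd_sub (f := fun y => epd i g y * (f y)⁻¹)
      (g := fun y => g y * (f y * f y)⁻¹ * epd i f y) i ((hdgi x).mul (hinv x)) (((hgd x).mul hffinv).mul (hdfi x)),
    epd_mul i (hdgi x) (hinv x), epd_inv i (hfd x) (hfne x),
    epd_mul (f := fun y => g y * (f y * f y)⁻¹) (g := epd i f) i ((hgd x).mul hffinv) (hdfi x),
    epd_mul i (hgd x) hffinv, epd_inv i hff hffne,
    epd_mul i (hfd x) (hfd x)]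
  field_simp [hfne x]
  ring

lemma elap_mul_inv {f g : EuclideanSpace ℝ (Fin n) → ℝ} (hf : ContDiff ℝ (⊤ : ℕ∞) f)
    (hg : ContDiff ℝ (⊤ : ℕ∞) g) (hfne : ∀ y, f y ≠ 0) (x : EuclideanSpace ℝ (Fin n)) :
    elap (fun z => g z * (f z)⁻¹) x
      = elap g x * (f x)⁻¹
        - 2 * ((f x) ^ 2)⁻¹ * ∑ i, epd i g x * epd i f x
        + 2 * g x * ((f x) ^ 3)⁻¹ * ∑ i, (epd i f x) ^ 2
        - g x * ((f x) ^ 2)⁻¹ * elap f x := by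
  simp only [elap, Finset.mul_sum, Finset.sum_mul, ← Finset.sum_sub_distrib,
    ← Finset.sum_add_distrib]
  refine Finset.sum_congr rfl fun i _ => ?_
  rw [epd2_mul_inv hf hg hfne i x]

end main

/-- For a positive smooth solution `u` of `∂ₜu = Δu + A` and
`w = log u`: `(∂ₜ − Δ)(A·u⁻¹) = u⁻¹(∂ₜ − Δ)A − A²u⁻² + 2u⁻¹⟨∇w, ∇A⟩ − 2A·u⁻¹‖∇w‖²`
pointwise. -/
theorem heat_Au_inv_identity (n : ℕ) (hn : 1 ≤ n)
    (u A : ℝ × EuclideanSpace ℝ (Fin n) → ℝ)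
    (hu : ContDiff ℝ (⊤ : ℕ∞) u) (hA : ContDiff ℝ (⊤ : ℕ∞) A)
    (hpos : ∀ p, 0 < u p)
    (hheat : ∀ t x, pdt u t x = slap u t x + A (t, x))
    (w : ℝ × EuclideanSpace ℝ (Fin n) → ℝ) (hw : w = Real.log ∘ u) :
    ∀ t x, pdt (fun p => A p * (u p)⁻¹) t x - slap (fun p => A p * (u p)⁻¹) t x
      = (u (t, x))⁻¹ * (pdt A t x - slap A t x)
        - (A (t, x)) ^ 2 * ((u (t, x)) ^ 2)⁻¹
        + 2 * (u (t, x))⁻¹ * (inner ℝ (sgrad w t x) (sgrad A t x) : ℝ)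
        - 2 * A (t, x) * (u (t, x))⁻¹ * ‖sgrad w t x‖ ^ 2 := by
  intro t x
  have hud := hu.differentiable (by simp)
  have hAd := hA.differentiable (by simp)
  have hFc : ContDiff ℝ (⊤ : ℕ∞) (fun y => u (t, y)) := hu.comp (contDiff_const.prodMk contDiff_id)
  have hGc : ContDiff ℝ (⊤ : ℕ∞) (fun y => A (t, y)) := hA.comp (contDiff_const.prodMk contDiff_id)
  have hne : ∀ y, u (t, y) ≠ 0 := fun y => (hpos _).ne'
  have hnex : u (t, x) ≠ 0 := hne x
  -- Laplacian part
  have hlap := elap_mul_inv hFc hGc hne x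
  -- time derivative part
  have hta : DifferentiableAt ℝ (fun s => A (s, x)) t :=
    (hAd.comp (differentiable_id.prodMk (differentiable_const x))) t
  have htu : DifferentiableAt ℝ (fun s => u (s, x)) t :=
    (hud.comp (differentiable_id.prodMk (differentiable_const x))) t
  have HA : HasDerivAt (fun s => A (s, x)) (pdt A t x) t := hta.hasDerivAt
  have HU : HasDerivAt (fun s => u (s, x)) (pdt u t x) t := htu.hasDerivAt
  have Hmul : HasDerivAt (fun s => A (s, x) * (u (s, x))⁻¹)
      (pdt A t x * (u (t, x))⁻¹ + A (t, x) * (-(pdt u t x) / u (t, x) ^ 2)) t :=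
    HA.mul (HU.inv hnex)
  have hdt : pdt (fun p => A p * (u p)⁻¹) t x
      = pdt A t x * (u (t, x))⁻¹ + A (t, x) * (-(pdt u t x) / u (t, x) ^ 2) := Hmul.deriv
  -- gradient of w
  have hwslice : (fun y => w (t, y)) = fun y => Real.log (u (t, y)) := by
    funext y; rw [hw]; rfl
  have hFd := hFc.differentiable (by simp)
  have hepdw : ∀ i, epd i (fun y => w (t, y)) x = (u (t, x))⁻¹ * epd i (fun y => u (t, y)) x := by
    intro i
    rw [hwslice, epd_log i (hFd x) hnex]
  have hinner : (inner ℝ (sgrad w t x) (sgrad A t x) : ℝ)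
      = (u (t, x))⁻¹ * ∑ i, epd i (fun y => A (t, y)) x * epd i (fun y => u (t, y)) x := by
    rw [sgrad, sgrad, inner_egrad, Finset.mul_sum]
    exact Finset.sum_congr rfl fun i _ => by rw [hepdw i]; ring
  have hnorm : ‖sgrad w t x‖ ^ 2
      = ((u (t, x))⁻¹) ^ 2 * ∑ i, (epd i (fun y => u (t, y)) x) ^ 2 := by
    rw [sgrad, norm_egrad_sq, Finset.mul_sum]
    exact Finset.sum_congr rfl fun i _ => by rw [hepdw i]; ring
  have hheat' : pdt u t x = elap (fun y => u (t, y)) x + A (t, x) := hheat t x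
  have hslapA : slap A t x = elap (fun y => A (t, y)) x := rfl
  have hslapmul : slap (fun p => A p * (u p)⁻¹) t x
      = elap (fun z => A (t, z) * (u (t, z))⁻¹) x := rfl
  rw [hslapmul, hlap, hdt, hinner, hnorm, hslapA, hheat']
  field_simp
  ring
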